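/- Every finitely additive probability $P$ on $\mathcal{A}$ with $P \sim P_0$ can be written as $P = \alpha P_1 + (1-\alpha) Q$ where $\alpha \in [0,1)$, $P_1$ is a finitely additive probability that is pure unless $\alpha = 0$, $Q$ is a countably additive probability on $\mathcal{A}$, and $Q \sim P_0$. -/

import Mathlib

open MeasureTheory Set

namespace FAP

variable {Ω : Type*}

/-- A finitely additive probability on the power set of `Ω`. -/
def IsFAP (P : Set Ω → ℝ) : Prop :=
  P univ = 1 ∧ (∀ A : Set Ω, 0 ≤ P A) ∧
    ∀ A B : Set Ω, Disjoint A B → P (A ∪ B) = P A + P B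

/-- A finitely additive probability on the σ-field of a measurable space `Ω`. -/
def IsFAPm [MeasurableSpace Ω] (P : Set Ω → ℝ) : Prop :=
  P univ = 1 ∧ (∀ A : Set Ω, MeasurableSet A → 0 ≤ P A) ∧
    ∀ A B : Set Ω, MeasurableSet A → MeasurableSet B → Disjoint A B →
      P (A ∪ B) = P A + P B

/-- The finitely additive integral of a bounded function `X` with respect to a
finitely additive probability `P`, defined via the layer-cake formula
(which agrees with the uniform-limit-of-simple-functions definition). -/
noncomputable def faIntegral (P : Set Ω → ℝ) (X : Ω → ℝ) : ℝ :=
  (∫ t in Ioi (0 : ℝ), P {ω | t < X ω}) -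
    (∫ t in Iio (0 : ℝ), (1 - P {ω | t < X ω}))

/-- `P` is absolutely continuous with respect to the (countably additive) measure `P₀`. -/
def AC [MeasurableSpace Ω] (P : Set Ω → ℝ) (P₀ : Measure Ω) : Prop :=
  ∀ A : Set Ω, MeasurableSet A → P₀ A = 0 → P A = 0

/-- `P` and `P₀` have the same null sets. -/
def EquivP [MeasurableSpace Ω] (P : Set Ω → ℝ) (P₀ : Measure Ω) : Prop :=
  ∀ A : Set Ω, MeasurableSet A → (P A = 0 ↔ P₀ A = 0)

/-- `P` is pure: the only countably additive measure `Γ` with `0 ≤ Γ ≤ P` is `Γ = 0`. -/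
def IsPure [MeasurableSpace Ω] (P : Set Ω → ℝ) : Prop :=
  ∀ Γ : Measure Ω, (∀ A : Set Ω, MeasurableSet A → Γ A ≤ ENNReal.ofReal (P A)) → Γ = 0

/-- The essential supremum `inf {a : P₀(X > a) = 0}` of a random variable `X`. -/
noncomputable def essSupR [MeasurableSpace Ω] (P₀ : Measure Ω) (X : Ω → ℝ) : ℝ :=
  sInf {a : ℝ | P₀ {ω | a < X ω} = 0}

end FAP

open FAP

/-!
The countably additive part `ν` of `P` is the outer measure induced by `P` on measurable sets:
finite additivity of `P` makes every measurable set Carathéodory measurable, so `ν` is a measure,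
and it is the largest measure below `P`. By maximality, `P - ν` dominates no nonzero measure, i.e.
it is pure. Finally `ν ≠ 0`: if `ν A = 0`, then for every `k` finitely many sets of a countable
cover of `A` carry `P`-mass `< 2⁻ᵏ` and miss only a `P₀`-small part of `A`; by Borel–Cantelli almost
every point of `A` lies in all of these finite unions from some `k` on, and the intersections of
their tails are `P`-null, hence `P₀`-null. Normalising `ν` and `P - ν` gives `Q` and `P₁`.
-/

open Filter Topology
open scoped ENNReal

namespace FAP.IsFAPm

variable {Ω : Type*} [MeasurableSpace Ω] {P : Set Ω → ℝ} {A B : Set Ω}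

theorem nonneg (hP : IsFAPm P) (hA : MeasurableSet A) : 0 ≤ P A := hP.2.1 A hA

theorem union (hP : IsFAPm P) (hA : MeasurableSet A) (hB : MeasurableSet B)
    (hAB : Disjoint A B) : P (A ∪ B) = P A + P B :=
  hP.2.2 A B hA hB hAB

theorem empty (hP : IsFAPm P) : P ∅ = 0 := by
  simpa using hP.union .empty .empty (disjoint_empty ∅)

theorem inter_add_diff (hP : IsFAPm P) (hA : MeasurableSet A) (hB : MeasurableSet B) :
    P (A ∩ B) + P (A \ B) = P A := by
  rw [← hP.union (hA.inter hB) (hA.diff hB) disjoint_sdiff_inter.symm, inter_union_sdiff]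

theorem mono (hP : IsFAPm P) (hA : MeasurableSet A) (hB : MeasurableSet B) (hAB : A ⊆ B) :
    P A ≤ P B := by
  have h := hP.inter_add_diff hB hA
  rw [inter_eq_right.2 hAB] at h
  linarith [hP.nonneg (hB.diff hA)]

theorem union_le (hP : IsFAPm P) (hA : MeasurableSet A) (hB : MeasurableSet B) :
    P (A ∪ B) ≤ P A + P B := by
  rw [← union_sdiff_self, hP.union hA (hB.diff hA) disjoint_sdiff_right]
  gcongr
  exact hP.mono (hB.diff hA) hB sdiff_subset

theorem biUnion_le_sum {ι : Type*} (hP : IsFAPm P) {s : ι → Set Ω}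
    (hs : ∀ i, MeasurableSet (s i)) (t : Finset ι) :
    P (⋃ i ∈ t, s i) ≤ ∑ i ∈ t, P (s i) := by
  classical
  induction t using Finset.induction with
  | empty => simp [hP.empty]
  | insert a t ha ih =>
    rw [Finset.set_biUnion_insert, Finset.sum_insert ha]
    exact (hP.union_le (hs a) (t.measurableSet_biUnion fun i _ => hs i)).trans (by gcongr)

noncomputable def outerMeasure (hP : IsFAPm P) : OuterMeasure Ω :=
  inducedOuterMeasure (fun s (_ : MeasurableSet s) => ENNReal.ofReal (P s)) .empty
    (by simp [hP.empty])

theorem le_outerMeasure_caratheodory (hP : IsFAPm P) :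
    ‹MeasurableSpace Ω› ≤ hP.outerMeasure.caratheodory := fun s hs => by
  unfold outerMeasure inducedOuterMeasure
  refine OuterMeasure.ofFunction_caratheodory fun t => ?_
  by_cases ht : MeasurableSet t
  · rw [extend_eq _ (ht.inter hs), extend_eq _ (ht.diff hs), extend_eq _ ht,
      ← ENNReal.ofReal_add (hP.nonneg (ht.inter hs)) (hP.nonneg (ht.diff hs)),
      hP.inter_add_diff ht hs]
  · rw [extend_eq_top _ ht]
    exact le_top

/-- The countably additive part of `P` in its Yosida–Hewitt decomposition. -/
noncomputable def countablePart (hP : IsFAPm P) : Measure Ω :=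
  hP.outerMeasure.toMeasure hP.le_outerMeasure_caratheodory

theorem countablePart_apply (hP : IsFAPm P) (hA : MeasurableSet A) :
    hP.countablePart A = hP.outerMeasure A :=
  toMeasure_apply _ _ hA

theorem countablePart_le (hP : IsFAPm P) (hA : MeasurableSet A) :
    hP.countablePart A ≤ ENNReal.ofReal (P A) := by
  rw [hP.countablePart_apply hA, outerMeasure, inducedOuterMeasure]
  exact (OuterMeasure.ofFunction_le A).trans (extend_eq _ hA).le

theorem countablePart_measureReal_le (hP : IsFAPm P) (hA : MeasurableSet A) :
    hP.countablePart.real A ≤ P A :=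
  ENNReal.toReal_le_of_le_ofReal (hP.nonneg hA) (hP.countablePart_le hA)

instance (hP : IsFAPm P) : IsFiniteMeasure hP.countablePart :=
  ⟨(hP.countablePart_le .univ).trans_lt ENNReal.ofReal_lt_top⟩

theorem le_countablePart (hP : IsFAPm P) {ν : Measure Ω}
    (hν : ∀ A, MeasurableSet A → ν A ≤ ENNReal.ofReal (P A)) : ν ≤ hP.countablePart :=
  Measure.le_iff.2 fun A hA =>
    (hP.countablePart_apply hA).symm ▸ le_inducedOuterMeasure.2 hν A

theorem exists_cover_of_countablePart_lt (hP : IsFAPm P) (hA : MeasurableSet A)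
    {ε : ℝ≥0∞} (h : hP.countablePart A < ε) :
    ∃ s : ℕ → Set Ω, (∀ i, MeasurableSet (s i)) ∧ A ⊆ ⋃ i, s i ∧
      ∑' i, ENNReal.ofReal (P (s i)) < ε := by
  rw [hP.countablePart_apply hA, outerMeasure, inducedOuterMeasure,
    OuterMeasure.ofFunction_apply] at h
  simp only [iInf_lt_iff] at h
  obtain ⟨s, hAs, hsum⟩ := h
  have hs : ∀ i, MeasurableSet (s i) := fun i => by
    by_contra hi
    exact (ENNReal.le_tsum i).trans_lt hsum |>.ne_top (extend_eq_top _ hi)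
  exact ⟨s, hs, hAs, (tsum_congr fun i => (extend_eq _ (hs i)).symm).trans_lt hsum⟩

theorem exists_almost_cover_of_countablePart_lt (hP : IsFAPm P) (μ : Measure Ω)
    [IsFiniteMeasure μ] (hA : MeasurableSet A) {ε : ℝ}
    (h : hP.countablePart A < ENNReal.ofReal ε) {δ : ℝ≥0∞} (hδ : 0 < δ) :
    ∃ B, MeasurableSet B ∧ P B < ε ∧ μ (A \ B) < δ := by
  obtain ⟨s, hs, hAs, hsum⟩ := hP.exists_cover_of_countablePart_lt hA h
  have hmeas (n : ℕ) : MeasurableSet (accumulate s n) := by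
    rw [accumulate_def]
    exact .iUnion fun i => .iUnion fun _ => hs i
  have hlim : Tendsto (fun n => μ (A \ accumulate s n)) atTop (𝓝 0) := by
    have := tendsto_measure_iInter_atTop (μ := μ)
      (fun n => (hA.diff (hmeas n)).nullMeasurableSet)
      (fun m n hmn => sdiff_subset_sdiff_right (monotone_accumulate hmn)) ⟨0, measure_ne_top _ _⟩
    rwa [← sdiff_iUnion, iUnion_accumulate, sdiff_eq_empty.2 hAs, measure_empty] at this
  obtain ⟨n, hn⟩ := ((tendsto_order.1 hlim).2 δ hδ).exists
  refine ⟨accumulate s n, hmeas n, ?_, hn⟩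
  have hle : P (accumulate s n) ≤ ∑ i ∈ Finset.Iic n, P (s i) := by
    simpa [accumulate_def] using hP.biUnion_le_sum hs (Finset.Iic n)
  refine (ENNReal.ofReal_lt_ofReal_iff_of_nonneg (hP.nonneg (hmeas n))).1
    ((ENNReal.ofReal_le_ofReal hle).trans_lt ?_)
  rw [ENNReal.ofReal_sum_of_nonneg fun i _ => hP.nonneg (hs i)]
  exact (ENNReal.sum_le_tsum _).trans_lt hsum

theorem measure_eq_zero_of_countablePart_eq_zero (hP : IsFAPm P) (μ : Measure Ω)
    [IsFiniteMeasure μ] (hμ : ∀ A, MeasurableSet A → P A = 0 → μ A = 0)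
    (hA : MeasurableSet A) (h0 : hP.countablePart A = 0) : μ A = 0 := by
  have hB (k : ℕ) : ∃ B, MeasurableSet B ∧ P B < (2⁻¹ : ℝ) ^ k ∧ μ (A \ B) < 2⁻¹ ^ k :=
    hP.exists_almost_cover_of_countablePart_lt μ hA (h0 ▸ ENNReal.ofReal_pos.2 (by positivity))
      (ENNReal.pow_pos (by norm_num) k)
  choose B hBm hPB hμB using hB
  have hsum : ∑' k, μ (A \ B k) ≠ ∞ :=
    ne_top_of_le_ne_top (by simp [ENNReal.tsum_geometric])
      (ENNReal.tsum_le_tsum fun k => (hμB k).le)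
  have htail (m : ℕ) : μ (⋂ k ≥ m, B k) = 0 := by
    have hmeas : MeasurableSet (⋂ k ≥ m, B k) := .iInter fun k => .iInter fun _ => hBm k
    refine hμ _ hmeas (le_antisymm ?_ (hP.nonneg hmeas))
    refine ge_of_tendsto
      (tendsto_pow_atTop_nhds_zero_of_lt_one (r := (2⁻¹ : ℝ)) (by norm_num) (by norm_num))
      (eventually_atTop.2 ⟨m, fun k hk => ?_⟩)
    exact (hP.mono hmeas (hBm k) (biInter_subset_of_mem hk)).trans (hPB k).le
  rw [measure_eq_zero_iff_ae_notMem]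
  filter_upwards [ae_eventually_notMem hsum,
    ae_all_iff.2 fun m => measure_eq_zero_iff_ae_notMem.1 (htail m)] with x hx hxtail hxA
  obtain ⟨m, hm⟩ := eventually_atTop.1 hx
  exact hxtail m (mem_iInter₂.2 fun k hk => by_contra fun hxB => hm k hk ⟨hxA, hxB⟩)

theorem countablePart_eq_zero_iff (hP : IsFAPm P) (μ : Measure Ω) [IsFiniteMeasure μ]
    (hPμ : EquivP P μ) (hA : MeasurableSet A) : hP.countablePart A = 0 ↔ μ A = 0 := by
  refine ⟨hP.measure_eq_zero_of_countablePart_eq_zero μ (fun B hB => (hPμ B hB).1) hA,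
    fun h => nonpos_iff_eq_zero.1 ?_⟩
  simpa [(hPμ A hA).2 h] using hP.countablePart_le hA

section Remainder

variable {ν : Measure Ω} [IsFiniteMeasure ν]

theorem measureReal_eq_of_measureReal_univ_eq_one (hP : IsFAPm P)
    (hν : ∀ A, MeasurableSet A → ν.real A ≤ P A) (h1 : ν.real univ = 1) (hA : MeasurableSet A) :
    ν.real A = P A := by
  have hPA := hP.union hA hA.compl disjoint_compl_right
  rw [union_compl_self, hP.1] at hPA
  linarith [hν A hA, hν Aᶜ hA.compl, measureReal_add_measureReal_compl (μ := ν) hA]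

theorem sub_measureReal_div (hP : IsFAPm P) (hν : ∀ A, MeasurableSet A → ν.real A ≤ P A)
    (h1 : ν.real univ < 1) : IsFAPm fun A => (P A - ν.real A) / (1 - ν.real univ) := by
  have hc : 0 < 1 - ν.real univ := sub_pos.2 h1
  refine ⟨by dsimp only; rw [hP.1, div_self hc.ne'],
    fun A hA => div_nonneg (sub_nonneg.2 (hν A hA)) hc.le, fun A B hA hB hAB => ?_⟩
  dsimp only
  rw [hP.union hA hB hAB, measureReal_union hAB hB]
  ring

end Remainder

theorem isPure_sub_countablePart_div (hP : IsFAPm P) (h1 : hP.countablePart.real univ < 1) :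
    IsPure fun A => (P A - hP.countablePart.real A) / (1 - hP.countablePart.real univ) := by
  set ν := hP.countablePart
  intro Γ hΓ
  have hc : 0 < 1 - ν.real univ := sub_pos.2 h1
  have hle : ENNReal.ofReal (1 - ν.real univ) • Γ + ν ≤ ν := by
    refine hP.le_countablePart fun A hA => ?_
    calc (ENNReal.ofReal (1 - ν.real univ) • Γ + ν) A
        ≤ ENNReal.ofReal (1 - ν.real univ) *
            ENNReal.ofReal ((P A - ν.real A) / (1 - ν.real univ)) + ENNReal.ofReal (ν.real A) := by
          rw [Measure.add_apply, Measure.smul_apply, smul_eq_mul, ofReal_measureReal]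
          gcongr
          exact hΓ A hA
      _ = ENNReal.ofReal (P A) := by
          rw [← ENNReal.ofReal_mul hc.le, mul_div_cancel₀ _ hc.ne',
            ← ENNReal.ofReal_add (sub_nonneg.2 (hP.countablePart_measureReal_le hA))
              measureReal_nonneg, sub_add_cancel]
  refine Measure.ext fun A _ => ?_
  have h := hle A
  rw [Measure.add_apply, Measure.smul_apply, smul_eq_mul] at h
  have h0 : ENNReal.ofReal (1 - ν.real univ) * Γ A = 0 := nonpos_iff_eq_zero.1
    ((ENNReal.add_le_add_iff_right (measure_ne_top ν A)).1 (by rwa [zero_add]))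
  rw [Measure.coe_zero, Pi.zero_apply]
  exact (mul_eq_zero.1 h0).resolve_left (ENNReal.ofReal_pos.2 hc).ne'

end FAP.IsFAPm

/-- every finitely additive probability P ∼ P₀ decomposes as
P = α P₁ + (1 - α) Q with α ∈ [0,1), P₁ finitely additive (pure unless α = 0),
and Q a countably additive probability with Q ∼ P₀. -/
theorem stmt9 {Ω : Type*} [MeasurableSpace Ω] (P₀ : Measure Ω) [IsProbabilityMeasure P₀]
    (P : Set Ω → ℝ) (hP : FAP.IsFAPm P) (heq : FAP.EquivP P P₀) :
    ∃ α : ℝ, 0 ≤ α ∧ α < 1 ∧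
      ∃ P₁ : Set Ω → ℝ, FAP.IsFAPm P₁ ∧ (α ≠ 0 → FAP.IsPure P₁) ∧
        ∃ Q : Measure Ω, IsProbabilityMeasure Q ∧
          (∀ A : Set Ω, MeasurableSet A → (Q A = 0 ↔ P₀ A = 0)) ∧
          ∀ A : Set Ω, MeasurableSet A →
            P A = α * P₁ A + (1 - α) * (Q A).toReal := by
  set ν := hP.countablePart
  have hν (A) (hA : MeasurableSet A) : ν.real A ≤ P A := hP.countablePart_measureReal_le hA
  have hnull (A) (hA : MeasurableSet A) : ν A = 0 ↔ P₀ A = 0 :=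
    hP.countablePart_eq_zero_iff P₀ heq hA
  have : NeZero ν := ⟨fun h => by simpa [h] using hnull univ .univ⟩
  have hc0 : 0 < ν.real univ := measureReal_univ_pos
  have hc1 : ν.real univ ≤ 1 := hP.1 ▸ hν univ .univ
  have hQ (A) : (((ν univ)⁻¹ • ν) A).toReal = ν.real A / ν.real univ := by
    simp [Measure.smul_apply, ENNReal.toReal_mul, measureReal_def, div_eq_inv_mul]
  have hQnull (A) (hA : MeasurableSet A) : ((ν univ)⁻¹ • ν) A = 0 ↔ P₀ A = 0 := by
    simp [Measure.smul_apply, hnull A hA]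
  refine ⟨1 - ν.real univ, by linarith, by linarith, ?_⟩
  rcases hc1.lt_or_eq with hc1 | hc1
  · refine ⟨_, hP.sub_measureReal_div hν hc1, fun _ => hP.isPure_sub_countablePart_div hc1,
      _, inferInstance, hQnull, fun A _ => ?_⟩
    rw [hQ, mul_div_cancel₀ _ (sub_pos.2 hc1).ne', sub_sub_cancel, mul_div_cancel₀ _ hc0.ne']
    ring
  · refine ⟨P, hP, fun h => absurd (sub_eq_zero.2 hc1.symm) h, _, inferInstance, hQnull,
      fun A hA => ?_⟩
    rw [hQ, hc1, hP.measureReal_eq_of_measureReal_univ_eq_one hν hc1 hA]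
    ring
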